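/- Assume the index sets are ordered, i.e. I1 = {1,…,l} and I0 = {l+1,…,n}, and let Ĉ be the stochastic SC decoder: a random vector on a common probability space with (X,Y) such that Ĉ_1^l = AX and, for each i ∈ {l+1,…,n}, conditionally on (Ĉ_1^{i−1}, Y) the symbol Ĉ_i has distribution μ_{C_i|C_1^{i−1}Y}(· | Ĉ_1^{i−1}, Y) and is conditionally independent of X. Then for every decoder φ : 𝒳^l × 𝒴^n → 𝒳^n, Prob(T^{−1}(Ĉ) ≠ X) ≤ 2 · Prob(φ(AX,Y) ≠ X). -/

import Mathlib

open Finset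

noncomputable def probOf {Ω : Type*} [Fintype Ω] (p : Ω → ℝ) (E : Set Ω) : ℝ :=
  ∑ ω, E.indicator p ω

noncomputable def condProb {Ω : Type*} [Fintype Ω] (p : Ω → ℝ) (E F : Set Ω) : ℝ :=
  probOf p (E ∩ F) / probOf p F

noncomputable def entropyOf {Ω Z : Type*} [Fintype Ω] [Fintype Z] (p : Ω → ℝ) (V : Ω → Z) : ℝ :=
  ∑ z, Real.negMulLog (probOf p {ω | V ω = z})

noncomputable def condEntropyOf {Ω U V : Type*} [Fintype Ω] [Fintype U] [Fintype V]
    (p : Ω → ℝ) (Uv : Ω → U) (Vv : Ω → V) : ℝ :=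
  entropyOf p (fun ω => (Uv ω, Vv ω)) - entropyOf p Vv

def prefixVec {𝒳 : Type*} {n : ℕ} (c : Fin n → 𝒳) (m : ℕ) (h : m ≤ n) : Fin m → 𝒳 :=
  fun k => c ⟨k.1, lt_of_lt_of_le k.2 h⟩

def scVecGo {𝒳 : Type*} {n : ℕ} (g : (i : Fin n) → (Fin i.1 → 𝒳) → 𝒳) :
    (k : ℕ) → k < n → 𝒳
  | k, hk => g ⟨k, hk⟩ (fun j => scVecGo g j.1 (j.2.trans hk))
termination_by k _ => k
decreasing_by exact j.2

def scVec {𝒳 : Type*} {n : ℕ} (g : (i : Fin n) → (Fin i.1 → 𝒳) → 𝒳) : Fin n → 𝒳 :=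
  fun i => scVecGo g i.1 i.2

def scDec {𝒳 𝒴 : Type*} {n l : ℕ}
    (I1 : Finset (Fin n)) (hc1 : I1.card = l)
    (f : (i : Fin n) → (Fin i.1 → 𝒳) → (Fin n → 𝒴) → 𝒳)
    (c : Fin l → 𝒳) (y : Fin n → 𝒴) : Fin n → 𝒳 :=
  scVec (fun i pref => if h : i ∈ I1 then c ((I1.orderIsoOfFin hc1).symm ⟨i, h⟩) else f i pref y)

def scDecOrd {𝒳 𝒴 : Type*} {n l : ℕ}
    (f : (i : Fin n) → (Fin i.1 → 𝒳) → (Fin n → 𝒴) → 𝒳)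
    (c : Fin l → 𝒳) (y : Fin n → 𝒴) : Fin n → 𝒳 :=
  scVec (fun i pref => if h : i.1 < l then c ⟨i.1, h⟩ else f i pref y)

/-!
Fix an observation `o` and write `w_x = P(X = x, O = o)`, `P_o = ∑ₓ w_x`. On `{O = o}`, drawing
`X̂` from the posterior of `X` given `O` errs with mass `∑ₓ w_x (P_o - w_x) / P_o`, while the guess
`a` errs with mass `P_o - w_a`, and `P_o² - ∑ₓ w_x² ≤ P_o² - w_a² ≤ 2 P_o (P_o - w_a)`. The
stochastic SC decoder is such a posterior sampler for `O = (AX, Y)`: by the chain rule, drawing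
each `Ĉ_i`, `i > l`, from `μ_{C_i|C_1^{i-1}Y}` draws `Ĉ` from the law of `C = T X` given
`(C_1^l, Y) = (AX, Y)`.
-/

section Probability

variable {Ω : Type*} [Fintype Ω] (p : Ω → ℝ)

lemma probOf_empty : probOf p ∅ = 0 := by
  simp [probOf]

lemma probOf_nonneg (hp0 : ∀ ω, 0 ≤ p ω) (E : Set Ω) : 0 ≤ probOf p E :=
  sum_nonneg fun ω _ => Set.indicator_nonneg (fun ω _ => hp0 ω) ω

lemma probOf_mono (hp0 : ∀ ω, 0 ≤ p ω) {E F : Set Ω} (h : E ⊆ F) :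
    probOf p E ≤ probOf p F :=
  sum_le_sum fun ω _ => Set.indicator_le_indicator_of_subset h hp0 ω

lemma probOf_sdiff {E F : Set Ω} (h : E ⊆ F) :
    probOf p (F \ E) = probOf p F - probOf p E := by
  simp only [probOf, Set.indicator_sdiff h, Pi.sub_apply, sum_sub_distrib]

lemma probOf_eq_sum_inter {Z : Type*} [Fintype Z] (E : Set Ω) (V : Ω → Z) :
    probOf p E = ∑ z, probOf p (E ∩ {ω | V ω = z}) := by
  classical
  unfold probOf
  rw [sum_comm]
  refine sum_congr rfl fun ω _ => ?_
  by_cases hω : ω ∈ E <;> simp [Set.indicator_apply, hω]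

lemma probOf_inter_eq_condProb_mul (hp0 : ∀ ω, 0 ≤ p ω) (E F : Set Ω) :
    probOf p (E ∩ F) = condProb p E F * probOf p F := by
  rcases eq_or_ne (probOf p F) 0 with hF | hF
  · have hEF : probOf p (E ∩ F) = 0 :=
      le_antisymm (hF ▸ probOf_mono p hp0 Set.inter_subset_right) (probOf_nonneg p hp0 _)
    rw [hEF, hF, mul_zero]
  · rw [condProb, div_mul_cancel₀ _ hF]

end Probability

lemma sum_mul_sum_sub_le {α : Type*} [Fintype α] (w : α → ℝ) (a : α) :
    ∑ x, w x * (∑ y, w y - w x) ≤ 2 * (∑ y, w y) * (∑ y, w y - w a) := by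
  set S := ∑ y, w y
  have hsq : w a ^ 2 ≤ ∑ x, w x ^ 2 :=
    single_le_sum (f := fun x => w x ^ 2) (fun x _ => sq_nonneg (w x)) (mem_univ a)
  calc ∑ x, w x * (S - w x) = S ^ 2 - ∑ x, w x ^ 2 := by
        simp only [mul_sub, sum_sub_distrib, ← sum_mul, sq]; rfl
    _ ≤ S ^ 2 - w a ^ 2 := by linarith
    _ ≤ 2 * S * (S - w a) := by nlinarith [sq_nonneg (S - w a)]

section PosteriorSampling

variable {Ω α γ : Type*} [Fintype Ω] [Fintype α] (p : Ω → ℝ) (X Xhat : Ω → α) (O : Ω → γ)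

-- `hpost` says `P(Xhat = x | X = x, O = o) = P(X = x | O = o)`, cross-multiplied so that it
-- also covers observations of mass zero.
lemma probOf_ne_inter_mul_of_posterior
    (hpost : ∀ x o, probOf p {ω | X ω = x ∧ Xhat ω = x ∧ O ω = o} * probOf p {ω | O ω = o} =
      probOf p {ω | X ω = x ∧ O ω = o} ^ 2) (o : γ) :
    probOf p ({ω | Xhat ω ≠ X ω} ∩ {ω | O ω = o}) * probOf p {ω | O ω = o} =
      ∑ x, probOf p {ω | X ω = x ∧ O ω = o} *
        (probOf p {ω | O ω = o} - probOf p {ω | X ω = x ∧ O ω = o}) := by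
  rw [probOf_eq_sum_inter p _ X, sum_mul]
  refine sum_congr rfl fun x _ => ?_
  have hset : {ω | Xhat ω ≠ X ω} ∩ {ω | O ω = o} ∩ {ω | X ω = x} =
      {ω | X ω = x ∧ O ω = o} \ {ω | X ω = x ∧ Xhat ω = x ∧ O ω = o} := by
    ext ω
    simp only [Set.mem_inter_iff, Set.mem_sdiff, Set.mem_ofPred_eq]
    constructor
    · rintro ⟨⟨hne, hO⟩, rfl⟩
      tauto
    · rintro ⟨⟨rfl, hO⟩, hne⟩
      tauto
  have hsub : {ω | X ω = x ∧ Xhat ω = x ∧ O ω = o} ⊆ {ω | X ω = x ∧ O ω = o} :=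
    fun ω h => ⟨h.1, h.2.2⟩
  rw [hset, probOf_sdiff p hsub, sub_mul, hpost]
  ring

variable [Fintype γ]

theorem probOf_ne_le_two_mul_of_posterior (hp0 : ∀ ω, 0 ≤ p ω)
    (hpost : ∀ x o, probOf p {ω | X ω = x ∧ Xhat ω = x ∧ O ω = o} * probOf p {ω | O ω = o} =
      probOf p {ω | X ω = x ∧ O ω = o} ^ 2)
    (ψ : γ → α) :
    probOf p {ω | Xhat ω ≠ X ω} ≤ 2 * probOf p {ω | ψ (O ω) ≠ X ω} := by
  rw [probOf_eq_sum_inter p _ O, probOf_eq_sum_inter p _ O, mul_sum]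
  refine sum_le_sum fun o _ => ?_
  set D := {ω | O ω = o}
  set w : α → ℝ := fun x => probOf p {ω | X ω = x ∧ O ω = o}
  have hw : ∑ x, w x = probOf p D := by
    rw [probOf_eq_sum_inter p D X]
    exact sum_congr rfl fun x _ => by rw [Set.inter_comm]; rfl
  have hguess : probOf p ({ω | ψ (O ω) ≠ X ω} ∩ D) = probOf p D - w (ψ o) := by
    have hset : {ω | ψ (O ω) ≠ X ω} ∩ D = D \ {ω | X ω = ψ o ∧ O ω = o} := by
      ext ω
      simp only [Set.mem_inter_iff, Set.mem_sdiff, Set.mem_ofPred_eq, D]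
      constructor
      · rintro ⟨hne, rfl⟩
        exact ⟨rfl, fun h => hne h.1.symm⟩
      · rintro ⟨rfl, hne⟩
        exact ⟨fun h => hne ⟨h.symm, rfl⟩, rfl⟩
    have hsub : {ω | X ω = ψ o ∧ O ω = o} ⊆ D := fun ω h => h.2
    rw [hset, probOf_sdiff p hsub]
  have key := sum_mul_sum_sub_le w (ψ o)
  rw [hw] at key
  rcases (probOf_nonneg p hp0 D).eq_or_lt with hD | hD
  · have := probOf_mono p hp0 (Set.inter_subset_right : {ω | Xhat ω ≠ X ω} ∩ D ⊆ D)
    linarith [probOf_nonneg p hp0 ({ω | ψ (O ω) ≠ X ω} ∩ D)]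
  · refine le_of_mul_le_mul_right ?_ hD
    rw [probOf_ne_inter_mul_of_posterior p X Xhat O hpost, hguess]
    linarith

end PosteriorSampling

section SuccessiveCancellation

variable {𝒳 : Type*} {n : ℕ}

@[simp]
lemma prefixVec_self (c : Fin n → 𝒳) (h : n ≤ n) : prefixVec c n h = c := rfl

lemma prefixVec_succ_eq_iff {i : ℕ} (h : i + 1 ≤ n) (u v : Fin n → 𝒳) :
    prefixVec u (i + 1) h = prefixVec v (i + 1) h ↔
      u ⟨i, h⟩ = v ⟨i, h⟩ ∧
        prefixVec u i (Nat.le_of_succ_le h) = prefixVec v i (Nat.le_of_succ_le h) := by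
  simp only [funext_iff, Fin.forall_fin_succ', prefixVec, Fin.val_castSucc, Fin.val_last]
  tauto

variable {Ω α β : Type*} [Fintype Ω] (p : Ω → ℝ)

-- `P(X, Ĉ_1^i, Y) = P(X, C_1^l, Y) · P(C_1^i | C_1^l, Y)`, cross-multiplied so that no null
-- event is divided by.
theorem probOf_scPrefix_mul (hp0 : ∀ ω, 0 ≤ p ω) (X : Ω → α) (Y : Ω → β)
    (C Chat : Ω → Fin n → 𝒳) {l : ℕ} (hl : l ≤ n)
    (hinit : ∀ ω, prefixVec (Chat ω) l hl = prefixVec (C ω) l hl)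
    (hstep : ∀ (i : Fin n), l ≤ i.1 → ∀ (cp : Fin i.1 → 𝒳) (y : β),
      0 < probOf p {ω | prefixVec (C ω) i.1 i.2.le = cp ∧ Y ω = y} →
      ∀ (a : 𝒳) (x : α),
        probOf p {ω | Chat ω i = a ∧ X ω = x ∧ prefixVec (Chat ω) i.1 i.2.le = cp ∧ Y ω = y} =
          condProb p {ω | C ω i = a} {ω | prefixVec (C ω) i.1 i.2.le = cp ∧ Y ω = y} *
            probOf p {ω | X ω = x ∧ prefixVec (Chat ω) i.1 i.2.le = cp ∧ Y ω = y})
    (x : α) (c : Fin n → 𝒳) (y : β) {i : ℕ} (hli : l ≤ i) (hi : i ≤ n) :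
    probOf p {ω | X ω = x ∧ prefixVec (Chat ω) i hi = prefixVec c i hi ∧ Y ω = y} *
        probOf p {ω | prefixVec (C ω) l hl = prefixVec c l hl ∧ Y ω = y} =
      probOf p {ω | X ω = x ∧ prefixVec (C ω) l hl = prefixVec c l hl ∧ Y ω = y} *
        probOf p {ω | prefixVec (C ω) i hi = prefixVec c i hi ∧ Y ω = y} := by
  induction i, hli using Nat.le_induction with
  | base => simp only [hinit]
  | succ i hli ih =>
    have hin : i < n := hi
    set G := {ω | prefixVec (C ω) i hin.le = prefixVec c i hin.le ∧ Y ω = y}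
    have hChat :
        {ω | X ω = x ∧ prefixVec (Chat ω) (i + 1) hi = prefixVec c (i + 1) hi ∧ Y ω = y} =
        {ω | Chat ω ⟨i, hin⟩ = c ⟨i, hin⟩ ∧ X ω = x ∧
          prefixVec (Chat ω) i hin.le = prefixVec c i hin.le ∧ Y ω = y} := by
      ext ω
      simp only [Set.mem_ofPred_eq, prefixVec_succ_eq_iff]
      tauto
    have hC : {ω | prefixVec (C ω) (i + 1) hi = prefixVec c (i + 1) hi ∧ Y ω = y} =
        {ω | C ω ⟨i, hin⟩ = c ⟨i, hin⟩} ∩ G := by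
      ext ω
      simp only [Set.mem_inter_iff, Set.mem_ofPred_eq, prefixVec_succ_eq_iff, G]
      tauto
    rw [hChat, hC]
    rcases (probOf_nonneg p hp0 G).eq_or_lt with hG | hG
    · have hCi : probOf p ({ω | C ω ⟨i, hin⟩ = c ⟨i, hin⟩} ∩ G) = 0 :=
        le_antisymm (hG ▸ probOf_mono p hp0 Set.inter_subset_right) (probOf_nonneg p hp0 _)
      have hprev : probOf p {ω | X ω = x ∧ prefixVec (Chat ω) i hin.le = prefixVec c i hin.le ∧
          Y ω = y} * probOf p {ω | prefixVec (C ω) l hl = prefixVec c l hl ∧ Y ω = y} = 0 := by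
        rw [ih hin.le, ← hG, mul_zero]
      rw [hCi, mul_zero]
      refine le_antisymm (hprev ▸ mul_le_mul_of_nonneg_right ?_ (probOf_nonneg p hp0 _))
        (mul_nonneg (probOf_nonneg p hp0 _) (probOf_nonneg p hp0 _))
      exact probOf_mono p hp0 fun ω h => h.2
    · rw [hstep ⟨i, hin⟩ hli _ y hG, mul_assoc, ih hin.le, probOf_inter_eq_condProb_mul p hp0]
      ring

end SuccessiveCancellation

/-- for ordered index sets, the stochastic SC decoder `Ĉ` (a random vector
with `Ĉ_1^l = AX` which at each `i ∈ I0` samples from `μ_{C_i|C_1^{i-1}Y}(·|Ĉ_1^{i-1},Y)`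
conditionally independently of `X`) satisfies
`Prob(T⁻¹(Ĉ) ≠ X) ≤ 2 · Prob(φ(AX,Y) ≠ X)` for every decoder `φ`. -/
theorem stmt5
    {Ω 𝒳 𝒴 : Type*} [Fintype Ω] [Fintype 𝒳] [Fintype 𝒴]
    (n l : ℕ) (hl : l ≤ n)
    (p : Ω → ℝ) (hp0 : ∀ ω, 0 ≤ p ω)
    (X : Ω → (Fin n → 𝒳)) (Y : Ω → (Fin n → 𝒴)) (Chat : Ω → (Fin n → 𝒳))
    (A : (Fin n → 𝒳) → (Fin l → 𝒳))
    (T : (Fin n → 𝒳) ≃ (Fin n → 𝒳))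
    (hT1 : ∀ x (j : Fin l), T x (Fin.castLE hl j) = A x j)
    (hinit : ∀ ω, prefixVec (Chat ω) l hl = A (X ω))
    (hstep : ∀ (i : Fin n), l ≤ i.1 → ∀ (cp : Fin i.1 → 𝒳) (y : Fin n → 𝒴),
      0 < probOf p {ω | prefixVec (T (X ω)) i.1 i.2.le = cp ∧ Y ω = y} →
      ∀ (a : 𝒳) (x : Fin n → 𝒳),
        probOf p {ω | Chat ω i = a ∧ X ω = x ∧ prefixVec (Chat ω) i.1 i.2.le = cp ∧ Y ω = y} =
          condProb p {ω | T (X ω) i = a}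
              {ω | prefixVec (T (X ω)) i.1 i.2.le = cp ∧ Y ω = y} *
            probOf p {ω | X ω = x ∧ prefixVec (Chat ω) i.1 i.2.le = cp ∧ Y ω = y})
    (φ : (Fin l → 𝒳) → (Fin n → 𝒴) → (Fin n → 𝒳)) :
    probOf p {ω | T.symm (Chat ω) ≠ X ω} ≤
      2 * probOf p {ω | φ (A (X ω)) (Y ω) ≠ X ω} := by
  have hprefix (x : Fin n → 𝒳) : prefixVec (T x) l hl = A x := funext (hT1 x)
  refine probOf_ne_le_two_mul_of_posterior p X (fun ω => T.symm (Chat ω))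
    (fun ω => (A (X ω), Y ω)) hp0 ?_ (fun o => φ o.1 o.2)
  rintro x ⟨s, y⟩
  obtain rfl | hs := eq_or_ne (A x) s
  · have h := probOf_scPrefix_mul p hp0 X Y (fun ω => T (X ω)) Chat hl
      (fun ω => (hinit ω).trans (hprefix (X ω)).symm) hstep x (T x) y hl le_rfl
    simp only [prefixVec_self, hprefix, EmbeddingLike.apply_eq_iff_eq] at h
    rw [sq]
    convert h using 3 <;> ext ω <;>
      simp only [Set.mem_ofPred_eq, Prod.mk.injEq, Equiv.symm_apply_eq] <;>
      constructor <;> rintro ⟨rfl, hrest⟩ <;> simp_all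
  · have hnull : {ω | X ω = x ∧ (A (X ω), Y ω) = (s, y)} = ∅ :=
      Set.eq_empty_of_forall_notMem fun ω ⟨hx, hO⟩ => hs (hx ▸ congrArg Prod.fst hO)
    have hsub : {ω | X ω = x ∧ T.symm (Chat ω) = x ∧ (A (X ω), Y ω) = (s, y)} ⊆
        {ω | X ω = x ∧ (A (X ω), Y ω) = (s, y)} := fun ω h => ⟨h.1, h.2.2⟩
    rw [Set.subset_eq_empty hsub hnull, hnull, probOf_empty, zero_mul, sq, zero_mul]
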